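/- Let J = [[−ρQ, −R],[Rᵀ, 0]] with Q symmetric PSD, ρ > 0, and N(Q) ⊆ N(Rᵀ). Let T_D, T_G have orthonormal columns spanning C(Q) and C(RᵀR) respectively, and suppose T_DᵀQT_D = Λ_D is positive definite and T_DᵀRT_G has full column rank. Then the projected matrix J' = [[−ρΛ_D, −T_DᵀRT_G],[T_GᵀRᵀT_D, 0]] is Hurwitz. -/

import Mathlib

/-!
Let `(x, y)` be an eigenvector of `J' = [[-ρΛ, -B], [Bᵀ, 0]]` for the eigenvalue `μ`. Pairing the
two block rows with `x*` and `y*` and adding, the off-diagonal contributions `-x*By` and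
`y*Bᵀx` are complex conjugates of each other (`B` is real), so they cancel in the real part:
`Re μ · (‖x‖² + ‖y‖²) = -ρ · Re (x*Λx)`. If `x = 0` the first row gives `By = 0`, hence `y = 0`
by injectivity of `B`; so `x ≠ 0`, `Re (x*Λx) > 0` and `Re μ < 0`.
-/

open Matrix Complex
open scoped ComplexOrder

namespace Matrix

variable {ι κ : Type*}

lemma exists_mulVec_eq_smul_of_mem_spectrum [Fintype ι] [DecidableEq ι] {K : Type*} [Field K]
    {M : Matrix ι ι K} {μ : K} (hμ : μ ∈ spectrum K M) : ∃ v ≠ 0, M *ᵥ v = μ • v := by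
  rw [← spectrum_toLin', ← Module.End.hasEigenvalue_iff_mem_spectrum] at hμ
  obtain ⟨v, hv⟩ := hμ.exists_hasEigenvector
  exact ⟨v, hv.2, by simpa using hv.apply_eq_smul⟩

lemma star_dotProduct_conjTranspose_mulVec [Fintype ι] [Fintype κ] {R : Type*} [CommRing R]
    [StarRing R] (M : Matrix ι κ R) (x : ι → R) (y : κ → R) :
    star y ⬝ᵥ (Mᴴ *ᵥ x) = star (star x ⬝ᵥ (M *ᵥ y)) := by
  rw [star_dotProduct, star_mulVec, conjTranspose_conjTranspose, dotProduct_mulVec]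

lemma re_star_dotProduct [Fintype ι] (x w : ι → ℂ) :
    (star x ⬝ᵥ w).re =
      (fun i ↦ (x i).re) ⬝ᵥ (fun i ↦ (w i).re) + (fun i ↦ (x i).im) ⬝ᵥ (fun i ↦ (w i).im) := by
  simp [dotProduct, ← Finset.sum_add_distrib]

lemma re_map_ofReal_mulVec [Fintype κ] (B : Matrix ι κ ℝ) (y : κ → ℂ) :
    (fun i ↦ ((B.map ofReal *ᵥ y) i).re) = B *ᵥ fun j ↦ (y j).re := by
  ext i; simp [mulVec, dotProduct]

lemma im_map_ofReal_mulVec [Fintype κ] (B : Matrix ι κ ℝ) (y : κ → ℂ) :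
    (fun i ↦ ((B.map ofReal *ᵥ y) i).im) = B *ᵥ fun j ↦ (y j).im := by
  ext i; simp [mulVec, dotProduct]

lemma PosDef.re_star_dotProduct_map_ofReal_mulVec_pos [Fintype ι] {A : Matrix ι ι ℝ}
    (hA : A.PosDef) {x : ι → ℂ} (hx : x ≠ 0) : 0 < (star x ⬝ᵥ (A.map ofReal *ᵥ x)).re := by
  rw [re_star_dotProduct, re_map_ofReal_mulVec, im_map_ofReal_mulVec]
  have hquad (c : ι → ℝ) : 0 ≤ c ⬝ᵥ (A *ᵥ c) := by
    simpa using hA.posSemidef.dotProduct_mulVec_nonneg c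
  by_cases hre : (fun i ↦ (x i).re) = 0
  · have him : (fun i ↦ (x i).im) ≠ 0 := fun him ↦
      hx (funext fun i ↦ Complex.ext (congrFun hre i) (congrFun him i))
    have := hA.dotProduct_mulVec_pos him
    simp only [star_trivial] at this
    linarith [hquad fun i ↦ (x i).re]
  · have := hA.dotProduct_mulVec_pos hre
    simp only [star_trivial] at this
    linarith [hquad fun i ↦ (x i).im]

lemma eq_zero_of_map_ofReal_mulVec_eq_zero [Fintype κ] {B : Matrix ι κ ℝ}
    (hB : Function.Injective B.mulVec) {y : κ → ℂ} (hy : B.map ofReal *ᵥ y = 0) : y = 0 := by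
  have hre : B *ᵥ (fun j ↦ (y j).re) = B *ᵥ 0 := by
    rw [← re_map_ofReal_mulVec, hy, mulVec_zero]; rfl
  have him : B *ᵥ (fun j ↦ (y j).im) = B *ᵥ 0 := by
    rw [← im_map_ofReal_mulVec, hy, mulVec_zero]; rfl
  funext j
  exact Complex.ext (congrFun (hB hre) j) (congrFun (hB him) j)

lemma re_mul_star_dotProduct_self [Fintype ι] (μ : ℂ) (x : ι → ℂ) :
    (μ * (star x ⬝ᵥ x)).re = μ.re * (star x ⬝ᵥ x).re := by
  simp [mul_re, ← (Complex.nonneg_iff.1 (dotProduct_star_self_nonneg x)).2]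

theorem re_lt_zero_of_mem_spectrum_map_ofReal_fromBlocks [Fintype ι] [Fintype κ]
    [DecidableEq ι] [DecidableEq κ] {ρ : ℝ} (hρ : 0 < ρ) {A : Matrix ι ι ℝ} (hA : A.PosDef)
    {B : Matrix ι κ ℝ} (hB : Function.Injective B.mulVec) {μ : ℂ}
    (hμ : μ ∈ spectrum ℂ ((fromBlocks (-ρ • A) (-B) Bᵀ 0).map ofReal)) : μ.re < 0 := by
  obtain ⟨v, hv0, hv⟩ := exists_mulVec_eq_smul_of_mem_spectrum hμ
  obtain ⟨x, y, rfl⟩ : ∃ x y, v = Sum.elim x y :=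
    ⟨v ∘ Sum.inl, v ∘ Sum.inr, (Sum.elim_comp_inl_inr v).symm⟩
  have hmap : (fromBlocks (-ρ • A) (-B) Bᵀ 0).map ofReal =
      fromBlocks (-(ρ : ℂ) • A.map ofReal) (-B.map ofReal) (B.map ofReal)ᴴ 0 := by
    rw [fromBlocks_map]
    congr 1 <;> ext <;> simp
  rw [hmap, fromBlocks_mulVec] at hv
  have hrow₁ : -(ρ : ℂ) • (A.map ofReal *ᵥ x) - B.map ofReal *ᵥ y = μ • x := by
    funext i
    simpa [sub_eq_add_neg, neg_mulVec, smul_mulVec] using congrFun hv (Sum.inl i)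
  have hrow₂ : (B.map ofReal)ᴴ *ᵥ x = μ • y := by
    funext i
    simpa using congrFun hv (Sum.inr i)
  have hx : x ≠ 0 := by
    rintro rfl
    have hy : B.map ofReal *ᵥ y = 0 := by simpa using hrow₁
    rw [eq_zero_of_map_ofReal_mulVec_eq_zero hB hy, Sum.elim_zero_zero] at hv0
    exact hv0 rfl
  set q := star x ⬝ᵥ (A.map ofReal *ᵥ x)
  set c := star x ⬝ᵥ (B.map ofReal *ᵥ y)
  have h₁ : -(ρ : ℂ) * q - c = μ * (star x ⬝ᵥ x) := by
    simpa [dotProduct_sub, dotProduct_smul] using congrArg (star x ⬝ᵥ ·) hrow₁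
  have h₂ : star c = μ * (star y ⬝ᵥ y) := by
    rw [← star_dotProduct_conjTranspose_mulVec, hrow₂, dotProduct_smul, smul_eq_mul]
  have hq : 0 < q.re := hA.re_star_dotProduct_map_ofReal_mulVec_pos hx
  have hnx : 0 < (star x ⬝ᵥ x).re := (Complex.pos_iff.1 (dotProduct_star_self_pos_iff.2 hx)).1
  have hny : 0 ≤ (star y ⬝ᵥ y).re := (Complex.nonneg_iff.1 (dotProduct_star_self_nonneg y)).1
  have key : μ.re * ((star x ⬝ᵥ x).re + (star y ⬝ᵥ y).re) = -(ρ * q.re) := by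
    have r₁ := congrArg re h₁
    have r₂ := congrArg re h₂
    rw [re_mul_star_dotProduct_self] at r₁ r₂
    simp only [neg_mul, sub_re, neg_re, mul_re, ofReal_re, ofReal_im, zero_mul, sub_zero,
      RCLike.star_def, conj_re] at r₁ r₂
    linarith
  exact neg_of_mul_neg_left (by rw [key]; linarith [mul_pos hρ hq]) (by linarith)

end Matrix

theorem stmt19_general {n m kD kG : ℕ} (ρ : ℝ) (hρ : 0 < ρ)
    (Q : Matrix (Fin n) (Fin n) ℝ)
    (R : Matrix (Fin n) (Fin m) ℝ)
    (TD : Matrix (Fin n) (Fin kD) ℝ)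
    (TG : Matrix (Fin m) (Fin kG) ℝ)
    (hΛ : (TDᵀ * Q * TD).PosDef)
    (hfull : Function.Injective (TDᵀ * R * TG).mulVec) :
    ∀ μ ∈ spectrum ℂ
      ((Matrix.fromBlocks (-ρ • (TDᵀ * Q * TD)) (-(TDᵀ * R * TG)) (TGᵀ * Rᵀ * TD)
        (0 : Matrix (Fin kG) (Fin kG) ℝ)).map Complex.ofReal),
      μ.re < 0 := by
  have hB : TGᵀ * Rᵀ * TD = (TDᵀ * R * TG)ᵀ := by
    simp only [transpose_mul, transpose_transpose, Matrix.mul_assoc]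
  rw [hB]
  exact fun μ hμ ↦ re_lt_zero_of_mem_spectrum_map_ofReal_fromBlocks hρ hΛ hfull hμ

/-- The projected Jacobian `J' = [[−ρΛ_D, −T_Dᵀ R T_G], [T_Gᵀ Rᵀ T_D, 0]]` appearing in the
SGP μ-WGAN stability proof is Hurwitz: if `Q` is symmetric PSD with `N(Q) ⊆ N(Rᵀ)`, `T_D` and
`T_G` have orthonormal columns spanning `C(Q)` and `C(RᵀR)` respectively, `Λ_D = T_Dᵀ Q T_D`
is positive definite and `T_Dᵀ R T_G` has full column rank, then all eigenvalues of `J'` have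
strictly negative real part. -/
theorem stmt19 {n m kD kG : ℕ} (ρ : ℝ) (hρ : 0 < ρ)
    (Q : Matrix (Fin n) (Fin n) ℝ) (hQ : Q.PosSemidef)
    (R : Matrix (Fin n) (Fin m) ℝ)
    (hNull : ∀ u : Fin n → ℝ, Q.mulVec u = 0 → Rᵀ.mulVec u = 0)
    (TD : Matrix (Fin n) (Fin kD) ℝ) (hTDo : TDᵀ * TD = 1)
    (hTDr : LinearMap.range TD.mulVecLin = LinearMap.range Q.mulVecLin)
    (TG : Matrix (Fin m) (Fin kG) ℝ) (hTGo : TGᵀ * TG = 1)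
    (hTGr : LinearMap.range TG.mulVecLin = LinearMap.range (Rᵀ * R).mulVecLin)
    (hΛ : (TDᵀ * Q * TD).PosDef)
    (hfull : Function.Injective (TDᵀ * R * TG).mulVec) :
    ∀ μ ∈ spectrum ℂ
      ((Matrix.fromBlocks (-ρ • (TDᵀ * Q * TD)) (-(TDᵀ * R * TG)) (TGᵀ * Rᵀ * TD)
        (0 : Matrix (Fin kG) (Fin kG) ℝ)).map Complex.ofReal),
      μ.re < 0 :=
  stmt19_general ρ hρ Q R TD TG hΛ hfull
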